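/- Let d ≥ 1 be an integer, α ∈ (0,2), and 0 < c₁ ≤ c₂. Suppose p : (0,∞) × ℝ^d × ℝ^d → ℝ is measurable in its last variable and satisfies c₁·min(t^(−d/α), t/|x−y|^(d+α)) ≤ p(t,x,y) ≤ c₂·min(t^(−d/α), t/|x−y|^(d+α)) for all t > 0, x, y ∈ ℝ^d. Let κ be any Markov kernel from ℝ^d to ℝ^d, and for t > 0 define Q_t g(x) = ∫_{ℝ^d} g(z)·p(t,x,z) dz for bounded measurable g, and P_t f(x) = Q_t(κ f)(x), where (κ f)(z) = ∫ f dκ(z). Then there is a constant C > 0 (depending only on d, α, c₁, c₂) such that for all t > 0, x, y ∈ ℝ^d and all bounded measurable f : ℝ^d → [0,∞), P_t f(x) ≤ C·(1 + |x−y|/t^(1/α))^(d+α) · P_t f(y). -/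

import Mathlib

/-!
With `s = t ^ (1 / α)` and `β = d + α`, the profile `min (t ^ (-d / α)) (t / r ^ β)` is
`t / max s r ^ β`, which lies between `t / (s + r) ^ β` and `2 ^ β * t / (s + r) ^ β` for `r > 0`.
Since `s + ‖y - z‖ ≤ (1 + ‖x - y‖ / s) * (s + ‖x - z‖)`, the two-sided bound gives
`p t x z ≤ c₂ / c₁ * 2 ^ β * (1 + ‖x - y‖ / s) ^ β * p t y z` for every `z ≠ y`, hence for almost
every `z`. Integrating this against `κ f`, which is again bounded, measurable and nonnegative,
gives the Harnack inequality for `P_t = Q_t ∘ κ`.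
-/

open Real MeasureTheory ProbabilityTheory Module

/-- At `r = 0` this is `0`, since `t / 0 = 0` in Lean. -/
noncomputable def stableDensityBound (d α t r : ℝ) : ℝ :=
  min (t ^ (-d / α)) (t / r ^ (d + α))

section Profile

variable {d α t r : ℝ}

lemma stableDensityBound_nonneg (ht : 0 ≤ t) (hr : 0 ≤ r) : 0 ≤ stableDensityBound d α t r :=
  le_min (by positivity) (by positivity)

lemma rpow_neg_div_eq_div_rpow (ht : 0 < t) (hα : α ≠ 0) :
    t ^ (-d / α) = t / (t ^ (1 / α)) ^ (d + α) := by
  rw [← rpow_mul ht.le, eq_div_iff (rpow_pos_of_pos ht _).ne', ← rpow_add ht,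
    show -d / α + 1 / α * (d + α) = 1 by field_simp; ring, rpow_one]

lemma div_rpow_le_mul_div_rpow {β K u v : ℝ} (ht : 0 ≤ t) (hβ : 0 ≤ β) (hu : 0 < u) (hv : 0 < v)
    (hvu : v ≤ K * u) : t / u ^ β ≤ K ^ β * (t / v ^ β) := by
  have hK : 0 < K := pos_of_mul_pos_left (hv.trans_le hvu) hu.le
  calc t / u ^ β = K ^ β * (t / (K * u) ^ β) := by
        rw [mul_rpow hK.le hu.le]; field_simp
    _ ≤ K ^ β * (t / v ^ β) := by gcongr

lemma stableDensityBound_le (ht : 0 < t) (hα : α ≠ 0) (hβ : 0 < d + α) (hr : 0 ≤ r) :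
    stableDensityBound d α t r ≤ 2 ^ (d + α) * (t / (t ^ (1 / α) + r) ^ (d + α)) := by
  have hs : 0 < t ^ (1 / α) := rpow_pos_of_pos ht _
  rcases hr.eq_or_lt with rfl | hr
  · calc stableDensityBound d α t 0 ≤ t / 0 ^ (d + α) := min_le_right _ _
      _ = 0 := by rw [zero_rpow hβ.ne', div_zero]
      _ ≤ _ := by positivity
  rcases le_total (t ^ (1 / α)) r with hsr | hrs
  · exact (min_le_right _ _).trans
      (div_rpow_le_mul_div_rpow ht.le hβ.le hr (by positivity) (by linarith))
  · rw [stableDensityBound, rpow_neg_div_eq_div_rpow ht hα]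
    exact (min_le_left _ _).trans
      (div_rpow_le_mul_div_rpow ht.le hβ.le hs (by positivity) (by linarith))

lemma div_add_rpow_le_stableDensityBound (ht : 0 < t) (hα : α ≠ 0) (hβ : 0 ≤ d + α)
    (hr : 0 < r) : t / (t ^ (1 / α) + r) ^ (d + α) ≤ stableDensityBound d α t r := by
  have hs : 0 < t ^ (1 / α) := rpow_pos_of_pos ht _
  rw [stableDensityBound, rpow_neg_div_eq_div_rpow ht hα]
  exact le_min (by gcongr; linarith) (by gcongr; linarith)

lemma add_le_one_add_div_mul_add {s a b c : ℝ} (hs : 0 < s) (ha : 0 ≤ a) (hc : 0 ≤ c)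
    (hb : b ≤ c + a) : s + b ≤ (1 + c / s) * (s + a) := by
  have hca : 0 ≤ c * a / s := by positivity
  have hexpand : (1 + c / s) * (s + a) = s + a + c + c * a / s := by field_simp; ring
  linarith

end Profile

section PointwiseHarnack

variable {E : Type*} [NormedAddCommGroup E] {d α t c₁ c₂ : ℝ} {q : E → E → ℝ}

theorem le_mul_of_stableDensityBound (ht : 0 < t) (hα : α ≠ 0) (hβ : 0 < d + α)
    (hc₁ : 0 < c₁) (hc₂ : 0 ≤ c₂)
    (hlow : ∀ x y, c₁ * stableDensityBound d α t ‖x - y‖ ≤ q x y)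
    (hup : ∀ x y, q x y ≤ c₂ * stableDensityBound d α t ‖x - y‖) (x : E) {y z : E}
    (hzy : z ≠ y) :
    q x z ≤ c₂ / c₁ * 2 ^ (d + α) * (1 + ‖x - y‖ / t ^ (1 / α)) ^ (d + α) * q y z := by
  have hs : 0 < t ^ (1 / α) := rpow_pos_of_pos ht _
  have hyz : 0 < ‖y - z‖ := norm_pos_iff.2 (sub_ne_zero.2 hzy.symm)
  have hsep : t ^ (1 / α) + ‖y - z‖ ≤ (1 + ‖x - y‖ / t ^ (1 / α)) * (t ^ (1 / α) + ‖x - z‖) :=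
    add_le_one_add_div_mul_add hs (norm_nonneg _) (norm_nonneg _) <| by
      simpa [norm_sub_rev x y] using norm_sub_le_norm_sub_add_norm_sub y x z
  calc q x z ≤ c₂ * stableDensityBound d α t ‖x - z‖ := hup x z
    _ ≤ c₂ * (2 ^ (d + α) * (t / (t ^ (1 / α) + ‖x - z‖) ^ (d + α))) := by
        gcongr; exact stableDensityBound_le ht hα hβ (norm_nonneg _)
    _ ≤ c₂ * (2 ^ (d + α) * ((1 + ‖x - y‖ / t ^ (1 / α)) ^ (d + α) *
          (t / (t ^ (1 / α) + ‖y - z‖) ^ (d + α)))) := by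
        gcongr; exact div_rpow_le_mul_div_rpow ht.le hβ.le (by positivity) (by positivity) hsep
    _ ≤ c₂ * (2 ^ (d + α) * ((1 + ‖x - y‖ / t ^ (1 / α)) ^ (d + α) *
          stableDensityBound d α t ‖y - z‖)) := by
        gcongr; exact div_add_rpow_le_stableDensityBound ht hα hβ.le hyz
    _ ≤ c₂ * (2 ^ (d + α) * ((1 + ‖x - y‖ / t ^ (1 / α)) ^ (d + α) * (q y z / c₁))) := by
        gcongr; rw [le_div_iff₀ hc₁, mul_comm]; exact hlow y z
    _ = c₂ / c₁ * 2 ^ (d + α) * (1 + ‖x - y‖ / t ^ (1 / α)) ^ (d + α) * q y z := by ring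

end PointwiseHarnack

section Integral

variable {E : Type*} [NormedAddCommGroup E] [NormedSpace ℝ E] [FiniteDimensional ℝ E]
  [MeasurableSpace E] [BorelSpace E] {μ : Measure E} [μ.IsAddHaarMeasure] {d α t c₁ c₂ : ℝ}

lemma integrable_add_norm_sub_rpow_neg {s β : ℝ} (hs : 0 < s) (hβ : (finrank ℝ E : ℝ) < β)
    (y : E) : Integrable (fun z => (s + ‖z - y‖) ^ (-β)) μ := by
  have h := (((integrable_one_add_norm (μ := μ) hβ).comp_smul (inv_ne_zero hs.ne')).const_mul
    (s ^ (-β))).comp_sub_right y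
  refine h.congr (ae_of_all _ fun z => ?_)
  dsimp only
  rw [norm_smul, norm_inv, norm_of_nonneg hs.le, ← mul_rpow hs.le (by positivity), mul_add,
    mul_one, mul_inv_cancel_left₀ hs.ne']

lemma integrable_of_stableDensityBound {f : E → ℝ} {y : E} (ht : 0 < t) (hα : α ≠ 0)
    (hdim : (finrank ℝ E : ℝ) < d + α) (hc₂ : 0 ≤ c₂) (hf : AEStronglyMeasurable f μ)
    (hf0 : ∀ z, 0 ≤ f z) (hup : ∀ z, f z ≤ c₂ * stableDensityBound d α t ‖y - z‖) :
    Integrable f μ := by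
  have hs : 0 < t ^ (1 / α) := rpow_pos_of_pos ht _
  have hβ : 0 < d + α := (Nat.cast_nonneg _).trans_lt hdim
  refine ((integrable_add_norm_sub_rpow_neg hs hdim y).const_mul (c₂ * 2 ^ (d + α) * t)).mono' hf
    (ae_of_all _ fun z => ?_)
  rw [norm_of_nonneg (hf0 z)]
  calc f z ≤ c₂ * stableDensityBound d α t ‖y - z‖ := hup z
    _ ≤ c₂ * (2 ^ (d + α) * (t / (t ^ (1 / α) + ‖y - z‖) ^ (d + α))) := by
        gcongr; exact stableDensityBound_le ht hα hβ (norm_nonneg _)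
    _ = c₂ * 2 ^ (d + α) * t * (t ^ (1 / α) + ‖z - y‖) ^ (-(d + α)) := by
        rw [rpow_neg (by positivity), norm_sub_rev]; ring

theorem integral_mul_le_of_stableDensityBound [Nontrivial E] {q : E → E → ℝ} {g : E → ℝ} {M : ℝ}
    (ht : 0 < t) (hα : α ≠ 0) (hdim : (finrank ℝ E : ℝ) < d + α) (hc₁ : 0 < c₁) (hc₂ : 0 ≤ c₂)
    (hmeas : ∀ x, Measurable (q x))
    (hlow : ∀ x y, c₁ * stableDensityBound d α t ‖x - y‖ ≤ q x y)
    (hup : ∀ x y, q x y ≤ c₂ * stableDensityBound d α t ‖x - y‖)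
    (hg : Measurable g) (hg0 : ∀ z, 0 ≤ g z) (hgM : ∀ z, ‖g z‖ ≤ M) (x y : E) :
    ∫ z, g z * q x z ∂μ ≤
      c₂ / c₁ * 2 ^ (d + α) * (1 + ‖x - y‖ / t ^ (1 / α)) ^ (d + α) * ∫ z, g z * q y z ∂μ := by
  have hβ : 0 < d + α := (Nat.cast_nonneg _).trans_lt hdim
  have hq0 : ∀ x z, 0 ≤ q x z := fun x z =>
    (mul_nonneg hc₁.le (stableDensityBound_nonneg ht.le (norm_nonneg _))).trans (hlow x z)
  have hint : Integrable (fun z => g z * q y z) μ :=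
    (integrable_of_stableDensityBound ht hα hdim hc₂ (hmeas y).aestronglyMeasurable (hq0 y)
      (hup y)).bdd_mul hg.aestronglyMeasurable (ae_of_all _ hgM)
  rw [← integral_const_mul]
  refine integral_mono_of_nonneg (ae_of_all _ fun z => mul_nonneg (hg0 z) (hq0 x z))
    (hint.const_mul _) ?_
  filter_upwards [Measure.ae_ne μ y] with z hzy
  calc g z * q x z
      ≤ g z * (c₂ / c₁ * 2 ^ (d + α) * (1 + ‖x - y‖ / t ^ (1 / α)) ^ (d + α) * q y z) := by
        gcongr
        · exact hg0 z
        · exact le_mul_of_stableDensityBound ht hα hβ hc₁ hc₂ hlow hup x hzy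
    _ = _ := by ring

end Integral

lemma ProbabilityTheory.Kernel.norm_integral_le_of_norm_le {X Y : Type*} [MeasurableSpace X]
    [MeasurableSpace Y] (κ : Kernel X Y) [IsMarkovKernel κ] {f : Y → ℝ} {M : ℝ}
    (hM : ∀ w, ‖f w‖ ≤ M) (z : X) :
    ‖∫ w, f w ∂κ z‖ ≤ M := by
  simpa using norm_integral_le_of_norm_le_const (μ := κ z) (ae_of_all _ hM)

theorem harnack_transfers_through_kernel
    (d : ℕ) (hd : 1 ≤ d) (α : ℝ) (hα : α ∈ Set.Ioo (0 : ℝ) 2)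
    (c₁ c₂ : ℝ) (hc₁ : 0 < c₁) (hc₁₂ : c₁ ≤ c₂)
    (p : ℝ → EuclideanSpace ℝ (Fin d) → EuclideanSpace ℝ (Fin d) → ℝ)
    (hmeas : ∀ t x, Measurable (p t x))
    (hlow : ∀ t > (0 : ℝ), ∀ x y,
      c₁ * min (t ^ (-(d : ℝ) / α)) (t / ‖x - y‖ ^ ((d : ℝ) + α)) ≤ p t x y)
    (hup : ∀ t > (0 : ℝ), ∀ x y,
      p t x y ≤ c₂ * min (t ^ (-(d : ℝ) / α)) (t / ‖x - y‖ ^ ((d : ℝ) + α)))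
    (κ : Kernel (EuclideanSpace ℝ (Fin d)) (EuclideanSpace ℝ (Fin d)))
    [IsMarkovKernel κ] :
    ∃ C > (0 : ℝ), ∀ t > (0 : ℝ), ∀ x y : EuclideanSpace ℝ (Fin d),
      ∀ f : EuclideanSpace ℝ (Fin d) → ℝ, Measurable f → (∀ z, 0 ≤ f z) →
      (∃ M, ∀ z, f z ≤ M) →
      ∫ z, (∫ w, f w ∂(κ z)) * p t x z ≤
        C * (1 + ‖x - y‖ / t ^ (1 / α)) ^ ((d : ℝ) + α) *
          ∫ z, (∫ w, f w ∂(κ z)) * p t y z := by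
  have : Nontrivial (EuclideanSpace ℝ (Fin d)) :=
    Module.nontrivial_of_finrank_pos (R := ℝ) (by rwa [finrank_euclideanSpace_fin])
  have hdim : (finrank ℝ (EuclideanSpace ℝ (Fin d)) : ℝ) < d + α := by simpa using hα.1
  have hc₂ : 0 < c₂ := hc₁.trans_le hc₁₂
  refine ⟨c₂ / c₁ * 2 ^ ((d : ℝ) + α), by positivity, fun t ht x y f hf hf0 ⟨M, hM⟩ => ?_⟩
  exact integral_mul_le_of_stableDensityBound ht hα.1.ne' hdim hc₁ hc₂.le (hmeas t) (hlow t ht)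
    (hup t ht) hf.stronglyMeasurable.integral_kernel.measurable (fun z => integral_nonneg hf0)
    (κ.norm_integral_le_of_norm_le (fun w => (norm_of_nonneg (hf0 w)).trans_le (hM w))) x y
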